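/- Let 0<s<1/2 and define u:ℝ→ℝ by u(x) = |x| for |x| ≤ 1 and u(x) = 1 for |x| > 1. Then there exists a function G ∈ C^∞([0,1/2]) (smooth with all derivatives bounded on [0,1/2]) such that for every x ∈ [0,1/2], (-Δ)^s u(x) = c_s · x^{1-2s} / (s(1-2s)) + G(x). -/

import Mathlib

open MeasureTheory Filter Set

/-- The normalizing constant `c_s` of the fractional Laplacian. -/
noncomputable def fracLapCoef (s : ℝ) : ℝ :=
  s * (4 : ℝ) ^ s * Real.Gamma (1 / 2 + s) / (Real.sqrt Real.pi * Real.Gamma (1 - s))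

/-- `HasFracLapAt s u x L` means the principal value defining `(-Δ)^s u (x)`
exists and equals `L`. -/
def HasFracLapAt (s : ℝ) (u : ℝ → ℝ) (x L : ℝ) : Prop :=
  (∀ ε : ℝ, 0 < ε →
    MeasureTheory.IntegrableOn (fun y : ℝ => (u x - u y) / |x - y| ^ (1 + 2 * s))
      {y : ℝ | ε < |y - x|}) ∧
  Filter.Tendsto (fun ε : ℝ =>
      fracLapCoef s * ∫ y in {y : ℝ | ε < |y - x|}, (u x - u y) / |x - y| ^ (1 + 2 * s))
    (nhdsWithin 0 (Set.Ioi 0)) (nhds L)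

/-- `MemCalpha α Ω f` : `f ∈ C^α(Ω)`, i.e. `f` is continuously differentiable with bounded
derivatives up to order `⌊α⌋` on `Ω`, and its `⌊α⌋`-th derivative is Hölder continuous of
exponent `α - ⌊α⌋` on `Ω`. -/
def MemCalpha (α : ℝ) (Ω : Set ℝ) (f : ℝ → ℝ) : Prop :=
  ContDiffOn ℝ (⌊α⌋₊ : ℕ) f Ω ∧
  (∀ k : ℕ, k ≤ ⌊α⌋₊ → ∃ C : ℝ, ∀ x ∈ Ω, |iteratedDerivWithin k f Ω x| ≤ C) ∧
  ∃ C : NNReal, HolderOnWith C (α - (⌊α⌋₊ : ℝ)).toNNReal (iteratedDerivWithin ⌊α⌋₊ f Ω) Ω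


namespace Stmt10Aux2
open Topology
open scoped Interval

lemma mul_rpow_self {s : ℝ} (t : ℝ) (ht : 0 < t) : t * t ^ (-(1+2*s)) = t ^ (-(2*s)) := by
  rw [show -(2*s) = 1 + -(1+2*s) by ring, Real.rpow_add ht, Real.rpow_one]

lemma mid_integrable {s : ℝ} (hs1 : s < 1/2) {g : ℝ → ℝ} (hg : Measurable g)
    {a b : ℝ} (hab : a ≤ b) (ha : 0 ≤ a)
    (hbound : ∀ t, a < t → t ≤ b → |g t| ≤ t ^ (-(2*s))) :
    IntervalIntegrable g volume a b := by
  apply (intervalIntegral.intervalIntegrable_rpow' (by linarith : (-1:ℝ) < -(2*s))).mono_fun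
    hg.aestronglyMeasurable.restrict
  filter_upwards [ae_restrict_mem measurableSet_uIoc] with t ht
  rw [uIoc_of_le hab] at ht
  have ht0 : 0 < t := lt_of_le_of_lt ha ht.1
  rw [Real.norm_eq_abs, Real.norm_eq_abs, abs_of_nonneg (Real.rpow_nonneg ht0.le _)]
  exact hbound t ht.1 ht.2


/-- FTC for the tail integral `∫_{Ioi c} (y - a)^{-(1+2s)}`. -/
lemma tail_int {s : ℝ} (hs0 : 0 < s) (a c : ℝ) (hca : a < c) :
    IntegrableOn (fun y : ℝ => (y - a) ^ (-(1+2*s))) (Ioi c) ∧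
    ∫ y in Ioi c, (y - a) ^ (-(1+2*s)) = (c - a) ^ (-(2*s)) / (2*s) := by
  have h2s : (0:ℝ) < 2*s := by linarith
  have hderiv : ∀ y ∈ Ioi c,
      HasDerivAt (fun y : ℝ => -((y - a) ^ (-(2*s)) / (2*s))) ((y - a) ^ (-(1+2*s))) y := by
    intro y hy
    have hya : 0 < y - a := by have : c < y := hy; linarith
    have h1 : HasDerivAt (fun y : ℝ => y - a) 1 y := (hasDerivAt_id y).sub_const a
    have h2 : HasDerivAt (fun t : ℝ => t ^ (-(2*s))) (-(2*s) * (y - a) ^ (-(2*s) - 1)) (y - a) :=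
      Real.hasDerivAt_rpow_const (Or.inl hya.ne')
    have h3 := ((h2.comp y h1).div_const (2*s)).neg
    convert h3 using 1
    · rfl
    · rfl
    · rfl
    rw [show -(1+2*s) = -(2*s) - 1 by ring]
    field_simp
  have hpos : ∀ y ∈ Ioi c, 0 ≤ (y - a) ^ (-(1+2*s)) := by
    intro y hy
    have : c < y := hy
    exact Real.rpow_nonneg (by linarith) _
  have hcont : ContinuousWithinAt (fun y : ℝ => -((y - a) ^ (-(2*s)) / (2*s))) (Ici c) c := by
    apply ContinuousAt.continuousWithinAt
    have h1 : ContinuousAt (fun y : ℝ => y - a) c := by fun_prop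
    have h2 : ContinuousAt (fun y : ℝ => (y - a) ^ (-(2*s))) c :=
      h1.rpow_const (Or.inl (sub_pos.mpr hca).ne')
    exact (h2.div_const _).neg
  have hlim : Tendsto (fun y : ℝ => -((y - a) ^ (-(2*s)) / (2*s))) atTop (𝓝 0) := by
    have h1 : Tendsto (fun y : ℝ => y - a) atTop atTop := tendsto_atTop_add_const_right _ (-a) tendsto_id
    have h2 := (tendsto_rpow_neg_atTop h2s).comp h1
    have h3 := (h2.div_const (2*s)).neg
    simpa using h3
  refine ⟨integrableOn_Ioi_deriv_of_nonneg hcont hderiv hpos hlim, ?_⟩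
  rw [integral_Ioi_of_hasDerivAt_of_nonneg hcont hderiv hpos hlim]
  ring




variable {s x : ℝ}

lemma key (hs0 : 0 < s) (hs1 : s < 1/2) (hx0 : 0 ≤ x) (hx2 : x ≤ 1/2) :
    Integrable (fun y : ℝ => (x - min |y| 1) / |x - y| ^ (1 + 2*s)) ∧
    ∫ y : ℝ, (x - min |y| 1) / |x - y| ^ (1 + 2*s) =
      x ^ (1-2*s) / (s*(1-2*s)) - ((1+x) ^ (1-2*s) + (1-x) ^ (1-2*s)) / (2*s*(1-2*s)) := by
  have h12 : (0:ℝ) < 1 - 2*s := by linarith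
  have hx1 : x ≤ 1 := by linarith
  set f : ℝ → ℝ := fun y : ℝ => (x - min |y| 1) / |x - y| ^ (1 + 2*s) with hf
  have hmf : Measurable f := by
    apply Measurable.div
    · exact (continuous_const.sub (continuous_abs.min continuous_const)).measurable
    · exact ((continuous_const.sub continuous_id).abs.rpow_const
        (fun y => Or.inr (by linarith))).measurable
  -- piece on (1, ∞)
  have tail1 := tail_int hs0 x 1 (by linarith)
  have e1 : EqOn f (fun y : ℝ => (x-1) * (y - x) ^ (-(1+2*s))) (Ioi 1) := by
    intro y hy
    have hy1 : (1:ℝ) < y := hy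
    have hmin : min |y| 1 = 1 := min_eq_right (hy1.le.trans (le_abs_self y))
    have habs : |x - y| = y - x := by rw [abs_sub_comm, abs_of_pos (by linarith)]
    rw [hf]
    simp only
    rw [hmin, habs, Real.rpow_neg (by linarith : (0:ℝ) ≤ y - x), div_eq_mul_inv]
  have hIoi1 : IntegrableOn f (Ioi 1) :=
    IntegrableOn.congr_fun (tail1.1.const_mul (x-1)) (fun y hy => (e1 hy).symm) measurableSet_Ioi
  have v1 : ∫ y in Ioi 1, f y = (x-1) * ((1-x) ^ (-(2*s)) / (2*s)) := by
    rw [setIntegral_congr_fun measurableSet_Ioi e1, integral_const_mul, tail1.2]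
  -- piece on (-∞, -1)
  have tail0 := tail_int hs0 (-x) 1 (by linarith)
  have e0 : EqOn (fun y : ℝ => f (-y)) (fun y : ℝ => (x-1) * (y - (-x)) ^ (-(1+2*s))) (Ioi 1) := by
    intro y hy
    have hy1 : (1:ℝ) < y := hy
    rw [hf]
    simp only
    have h1 : min |(-y)| 1 = 1 := min_eq_right (by rw [abs_neg]; exact hy1.le.trans (le_abs_self y))
    have h2 : |x - (-y)| = y - (-x) := by
      rw [show x - (-y) = y - (-x) by ring, abs_of_pos (by linarith)]
    rw [h1, h2, Real.rpow_neg (by linarith), div_eq_mul_inv]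
  have hIic : IntegrableOn f (Iic (-1)) := by
    have h1 : IntegrableOn (fun y : ℝ => f (-y)) (Ioi 1) :=
      IntegrableOn.congr_fun (tail0.1.const_mul (x-1)) (fun y hy => (e0 hy).symm) measurableSet_Ioi
    have h2 : IntegrableOn (fun y : ℝ => f (-y)) (Ici 1) := by
      rwa [integrableOn_Ici_iff_integrableOn_Ioi]
    rw [← (Measure.measurePreserving_neg (volume : Measure ℝ)).integrableOn_comp_preimage
        (Homeomorph.neg ℝ).measurableEmbedding]
    simpa [Function.comp_def] using h2
  have v0 : ∫ y in Iic (-1), f y = (x-1) * ((1+x) ^ (-(2*s)) / (2*s)) := by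
    rw [← integral_comp_neg_Ioi, setIntegral_congr_fun measurableSet_Ioi e0,
      integral_const_mul, tail0.2, show (1:ℝ) - -x = 1 + x by ring]
  -- piece on (-1, 0)
  set g₂ : ℝ → ℝ := fun t : ℝ => (2*x - t) * t ^ (-(1+2*s)) with hg₂
  have hg2m : Measurable g₂ :=
    (measurable_const.sub measurable_id).mul (measurable_id.pow_const _)
  have hg2I : IntervalIntegrable g₂ volume x (x+1) := by
    apply mid_integrable hs1 hg2m (by linarith) hx0
    intro t h1 h2
    have ht0 : 0 < t := lt_of_le_of_lt hx0 h1
    have hr : (0:ℝ) ≤ t ^ (-(1+2*s)) := Real.rpow_nonneg ht0.le _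
    rw [hg₂]
    simp only
    rw [abs_mul, abs_of_nonneg hr, ← mul_rpow_self (s := s) t ht0]
    apply mul_le_mul_of_nonneg_right _ hr
    rw [abs_le]
    constructor <;> linarith
  have e2 : EqOn f (fun y : ℝ => g₂ (x - y)) (Icc (-1) 0) := by
    intro y hy
    obtain ⟨hy1, hy2⟩ := hy
    have hxy : (0:ℝ) ≤ x - y := by linarith
    have hmin : min |y| 1 = -y := by
      rw [abs_of_nonpos hy2]; exact min_eq_left (by linarith)
    rw [hf, hg₂]
    simp only
    rw [hmin, abs_of_nonneg hxy, Real.rpow_neg hxy, div_eq_mul_inv,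
      show x - -y = 2*x - (x - y) by ring]
  have hIoc2 : IntegrableOn f (Ioc (-1) 0) := by
    have h1 := hg2I.comp_sub_left x
    rw [sub_self, show x - (x+1) = -1 by ring] at h1
    have h3 : IntervalIntegrable f volume (-1) 0 := by
      apply h1.symm.mono_fun hmf.aestronglyMeasurable.restrict
      filter_upwards [ae_restrict_mem measurableSet_uIoc] with y hy
      rw [uIoc_of_le (by norm_num : (-1:ℝ) ≤ 0)] at hy
      rw [e2 (Ioc_subset_Icc_self hy)]
    rwa [intervalIntegrable_iff_integrableOn_Ioc_of_le (by norm_num)] at h3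
  have hJ : ∫ t in x..(x+1), g₂ t =
      x/s * (x ^ (-(2*s)) - (x+1) ^ (-(2*s))) - ((x+1) ^ (1-2*s) - x ^ (1-2*s)) / (1-2*s) := by
    rcases hx0.eq_or_lt with hx|hx
    · -- x = 0
      rw [hg₂]
      rw [← hx]
      have hcong : ∀ᵐ t ∂(volume : Measure ℝ), t ∈ Ι (0:ℝ) (0+1) →
          (2*0 - t) * t ^ (-(1+2*s)) = -(t ^ (-(2*s))) := by
        apply Eventually.of_forall
        intro t ht
        have ht0 : 0 < t := by
          have := ht.1; simpa using this
        rw [← mul_rpow_self (s := s) t ht0]; ring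
      rw [intervalIntegral.integral_congr_ae hcong, intervalIntegral.integral_neg,
        integral_rpow (Or.inl (by linarith : (-1:ℝ) < -(2*s)))]
      rw [Real.zero_rpow (by linarith : -(2*s) + 1 ≠ 0), Real.zero_rpow (by linarith : -(2*s) ≠ 0),
        Real.zero_rpow (by linarith : 1 - 2*s ≠ 0)]
      norm_num [Real.one_rpow]
      ring
    · -- 0 < x
      have hFTC : ∀ t ∈ uIcc x (x+1),
          HasDerivAt (fun t : ℝ => -(x/s) * t ^ (-(2*s)) - t ^ (1-2*s)/(1-2*s))
            ((2*x - t) * t ^ (-(1+2*s))) t := by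
        intro t ht
        rw [uIcc_of_le (by linarith)] at ht
        have ht0 : 0 < t := lt_of_lt_of_le hx ht.1
        have d1 : HasDerivAt (fun t : ℝ => t ^ (-(2*s))) (-(2*s) * t ^ (-(2*s)-1)) t :=
          Real.hasDerivAt_rpow_const (Or.inl ht0.ne')
        have d2 : HasDerivAt (fun t : ℝ => t ^ (1-2*s)) ((1-2*s) * t ^ (1-2*s-1)) t :=
          Real.hasDerivAt_rpow_const (Or.inl ht0.ne')
        have h3 := (d1.const_mul (-(x/s))).sub (d2.div_const (1-2*s))
        convert h3 using 1
        · rfl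
        · rfl
        · rfl
        rw [show (1:ℝ)-2*s-1 = -(2*s)-1 + 1 by ring, show -(1+2*s) = -(2*s)-1 by ring,
          Real.rpow_add ht0 _ 1, Real.rpow_one]
        have h2s' : s ≠ 0 := hs0.ne'
        have h12' : (1:ℝ)-2*s ≠ 0 := by linarith
        field_simp
      have hFi : IntervalIntegrable (fun t : ℝ => (2*x - t) * t ^ (-(1+2*s))) volume x (x+1) := hg2I
      rw [intervalIntegral.integral_eq_sub_of_hasDerivAt hFTC hFi]
      have h12' : (1:ℝ)-2*s ≠ 0 := by linarith
      field_simp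
      ring
  have v2 : ∫ y in Ioc (-1) 0, f y =
      x/s * (x ^ (-(2*s)) - (x+1) ^ (-(2*s))) - ((x+1) ^ (1-2*s) - x ^ (1-2*s)) / (1-2*s) := by
    rw [← intervalIntegral.integral_of_le (by norm_num : (-1:ℝ) ≤ 0)]
    rw [intervalIntegral.integral_congr (by rwa [uIcc_of_le (by norm_num : (-1:ℝ) ≤ 0)])]
    rw [intervalIntegral.integral_comp_sub_left g₂ x, sub_zero, show x - (-1) = x + 1 by ring]
    exact hJ
  -- piece on (0, x)
  set g₃ : ℝ → ℝ := fun t : ℝ => t * t ^ (-(1+2*s)) with hg₃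
  have hg3m : Measurable g₃ := measurable_id.mul (measurable_id.pow_const _)
  have hg3b : ∀ t, (0:ℝ) < t → t ≤ x → |g₃ t| ≤ t ^ (-(2*s)) := by
    intro t h1 _
    rw [hg₃]
    simp only
    rw [mul_rpow_self (s := s) t h1, abs_of_nonneg (Real.rpow_nonneg h1.le _)]
  have hg3I : IntervalIntegrable g₃ volume 0 x := mid_integrable hs1 hg3m hx0 le_rfl hg3b
  have e3 : EqOn f (fun y : ℝ => g₃ (x - y)) (Icc 0 x) := by
    intro y hy
    obtain ⟨hy1, hy2⟩ := hy
    have hxy : (0:ℝ) ≤ x - y := by linarith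
    have hmin : min |y| 1 = y := by
      rw [abs_of_nonneg hy1]; exact min_eq_left (by linarith)
    rw [hf, hg₃]
    simp only
    rw [hmin, abs_of_nonneg hxy, Real.rpow_neg hxy, div_eq_mul_inv]
  have hIoc3 : IntegrableOn f (Ioc 0 x) := by
    have h1 := hg3I.comp_sub_left x
    rw [sub_zero, sub_self] at h1
    have h3 : IntervalIntegrable f volume 0 x := by
      apply h1.symm.mono_fun hmf.aestronglyMeasurable.restrict
      filter_upwards [ae_restrict_mem measurableSet_uIoc] with y hy
      rw [uIoc_of_le hx0] at hy
      rw [e3 ⟨hy.1.le, hy.2⟩]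
    rwa [intervalIntegrable_iff_integrableOn_Ioc_of_le hx0] at h3
  have v3 : ∫ y in Ioc 0 x, f y = x ^ (1-2*s) / (1-2*s) := by
    rw [← intervalIntegral.integral_of_le hx0]
    rw [intervalIntegral.integral_congr (by rwa [uIcc_of_le hx0])]
    rw [intervalIntegral.integral_comp_sub_left g₃ x, sub_self, sub_zero]
    have hcong : ∀ᵐ t ∂(volume : Measure ℝ), t ∈ Ι (0:ℝ) x → g₃ t = t ^ (-(2*s)) := by
      apply Eventually.of_forall
      intro t ht
      have ht0 : 0 < t := by
        rw [uIoc_of_le hx0] at ht; exact ht.1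
      rw [hg₃]; simp only; rw [mul_rpow_self (s := s) t ht0]
    rw [intervalIntegral.integral_congr_ae hcong,
      integral_rpow (Or.inl (by linarith : (-1:ℝ) < -(2*s)))]
    rw [Real.zero_rpow (by linarith : -(2*s) + 1 ≠ 0), show -(2*s) + 1 = 1 - 2*s by ring]
    ring
  -- piece on (x, 1)
  set g₄ : ℝ → ℝ := fun t : ℝ => -t * t ^ (-(1+2*s)) with hg₄
  have hg4m : Measurable g₄ := measurable_id.neg.mul (measurable_id.pow_const _)
  have hg4b : ∀ t, (0:ℝ) < t → t ≤ 1 - x → |g₄ t| ≤ t ^ (-(2*s)) := by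
    intro t h1 _
    rw [hg₄]
    simp only
    rw [neg_mul, abs_neg, mul_rpow_self (s := s) t h1,
      abs_of_nonneg (Real.rpow_nonneg h1.le _)]
  have hg4I : IntervalIntegrable g₄ volume 0 (1-x) := by
    apply mid_integrable hs1 hg4m (by linarith) le_rfl hg4b
  have e4 : EqOn f (fun y : ℝ => g₄ (y - x)) (Icc x 1) := by
    intro y hy
    obtain ⟨hy1, hy2⟩ := hy
    have hxy : (0:ℝ) ≤ y - x := by linarith
    have hmin : min |y| 1 = y := by
      rw [abs_of_nonneg (hx0.trans hy1)]; exact min_eq_left hy2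
    rw [hf, hg₄]
    simp only
    rw [hmin, abs_sub_comm, abs_of_nonneg hxy, Real.rpow_neg hxy, div_eq_mul_inv,
      show x - y = -(y - x) by ring, neg_mul]
  have hIoc4 : IntegrableOn f (Ioc x 1) := by
    have h1 := hg4I.comp_sub_right x
    rw [zero_add, sub_add_cancel] at h1
    have h3 : IntervalIntegrable f volume x 1 := by
      apply h1.mono_fun hmf.aestronglyMeasurable.restrict
      filter_upwards [ae_restrict_mem measurableSet_uIoc] with y hy
      rw [uIoc_of_le hx1] at hy
      rw [e4 ⟨hy.1.le, hy.2⟩]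
    rwa [intervalIntegrable_iff_integrableOn_Ioc_of_le hx1] at h3
  have v4 : ∫ y in Ioc x 1, f y = -((1-x) ^ (1-2*s) / (1-2*s)) := by
    rw [← intervalIntegral.integral_of_le hx1]
    rw [intervalIntegral.integral_congr (by rwa [uIcc_of_le hx1])]
    rw [intervalIntegral.integral_comp_sub_right (fun t => g₄ t) x, sub_self]
    have hcong : ∀ᵐ t ∂(volume : Measure ℝ), t ∈ Ι (0:ℝ) (1-x) → g₄ t = -(t ^ (-(2*s))) := by
      apply Eventually.of_forall
      intro t ht
      rw [uIoc_of_le (by linarith : (0:ℝ) ≤ 1-x)] at ht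
      have ht0 : 0 < t := ht.1
      rw [hg₄]; simp only; rw [neg_mul, mul_rpow_self (s := s) t ht0]
    rw [intervalIntegral.integral_congr_ae hcong, intervalIntegral.integral_neg,
      integral_rpow (Or.inl (by linarith : (-1:ℝ) < -(2*s)))]
    rw [Real.zero_rpow (by linarith : -(2*s) + 1 ≠ 0), show -(2*s) + 1 = 1 - 2*s by ring]
    ring
  -- assemble
  have hInt : Integrable f := by
    have h01 : IntegrableOn f (Ioi x) := by
      rw [← Ioc_union_Ioi_eq_Ioi hx1]; exact hIoc4.union hIoi1
    have h02 : IntegrableOn f (Ioi 0) := by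
      rw [← Ioc_union_Ioi_eq_Ioi hx0]; exact hIoc3.union h01
    have h03 : IntegrableOn f (Ioi (-1)) := by
      rw [← Ioc_union_Ioi_eq_Ioi (by norm_num : (-1:ℝ) ≤ 0)]; exact hIoc2.union h02
    rw [← integrableOn_univ, ← Iic_union_Ioi (a := (-1:ℝ))]
    exact hIic.union h03
  refine ⟨hInt, ?_⟩
  have htot : ∫ y, f y = (∫ y in Iic (-1), f y) + ((∫ y in Ioc (-1) 0, f y) +
      ((∫ y in Ioc 0 x, f y) + ((∫ y in Ioc x 1, f y) + ∫ y in Ioi 1, f y))) := by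
    rw [← setIntegral_univ (f := f) (μ := volume), ← Iic_union_Ioi (a := (-1:ℝ)),
      setIntegral_union (Iic_disjoint_Ioi le_rfl) measurableSet_Ioi hIic
        (hInt.integrableOn),
      ← Ioc_union_Ioi_eq_Ioi (by norm_num : (-1:ℝ) ≤ 0),
      setIntegral_union (Ioc_disjoint_Ioi le_rfl) measurableSet_Ioi hIoc2 hInt.integrableOn,
      ← Ioc_union_Ioi_eq_Ioi hx0,
      setIntegral_union (Ioc_disjoint_Ioi le_rfl) measurableSet_Ioi hIoc3 hInt.integrableOn,
      ← Ioc_union_Ioi_eq_Ioi hx1,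
      setIntegral_union (Ioc_disjoint_Ioi le_rfl) measurableSet_Ioi hIoc4 hInt.integrableOn]
  rw [htot, v0, v1, v2, v3, v4]
  have hA : x ^ (1-2*s) = x * x ^ (-(2*s)) := by
    rw [show (1:ℝ)-2*s = 1 + -(2*s) by ring,
      Real.rpow_add' hx0 (by intro h; linarith [h] : (1:ℝ) + -(2*s) ≠ 0), Real.rpow_one]
  have hB : (1+x) ^ (1-2*s) = (1+x) * (1+x) ^ (-(2*s)) := by
    rw [show (1:ℝ)-2*s = 1 + -(2*s) by ring, Real.rpow_add (by linarith : (0:ℝ) < 1+x),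
      Real.rpow_one]
  have hC : (1-x) ^ (1-2*s) = (1-x) * (1-x) ^ (-(2*s)) := by
    rw [show (1:ℝ)-2*s = 1 + -(2*s) by ring, Real.rpow_add (by linarith : (0:ℝ) < 1-x),
      Real.rpow_one]
  rw [show x + 1 = 1 + x by ring] at *
  rw [hA, hB, hC]
  field_simp
  ring

end Stmt10Aux2

theorem stmt10 (s : ℝ) (hs0 : 0 < s) (hs1 : s < 1 / 2)
    (u : ℝ → ℝ)
    (hu1 : ∀ x : ℝ, |x| ≤ 1 → u x = |x|)
    (hu2 : ∀ x : ℝ, 1 < |x| → u x = 1) :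
    ∃ G : ℝ → ℝ,
      ContDiffOn ℝ (⊤ : ℕ∞) G (Set.Icc 0 (1 / 2)) ∧
      (∀ n : ℕ, ∃ C : ℝ, ∀ x ∈ Set.Icc (0 : ℝ) (1 / 2),
        |iteratedDerivWithin n G (Set.Icc 0 (1 / 2)) x| ≤ C) ∧
      ∀ x ∈ Set.Icc (0 : ℝ) (1 / 2),
        HasFracLapAt s u x
          (fracLapCoef s * x ^ (1 - 2 * s) / (s * (1 - 2 * s)) + G x) := by
  have h12 : (0:ℝ) < 1 - 2*s := by linarith
  have huv : u = fun y : ℝ => min |y| 1 := by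
    funext y
    rcases le_or_gt |y| 1 with h|h
    · rw [hu1 y h, min_eq_left h]
    · rw [hu2 y h, min_eq_right h.le]
  set c : ℝ := -(fracLapCoef s / (2*s*(1-2*s))) with hcdef
  set G : ℝ → ℝ := fun x : ℝ => c * ((1+x) ^ (1-2*s) + (1-x) ^ (1-2*s)) with hGdef
  have hGsmooth : ContDiffOn ℝ (⊤ : ℕ∞) G (Set.Icc 0 (1/2)) := by
    apply ContDiffOn.mul contDiffOn_const
    apply ContDiffOn.add
    · intro x hx
      have h1 : ContDiffAt ℝ (⊤ : ℕ∞) (fun y : ℝ => y ^ (1-2*s)) (1+x) :=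
        Real.contDiffAt_rpow_const_of_ne (by have := hx.1; positivity)
      exact (h1.comp x ((contDiff_const.add contDiff_id).contDiffAt)).contDiffWithinAt
    · intro x hx
      have h1 : ContDiffAt ℝ (⊤ : ℕ∞) (fun y : ℝ => y ^ (1-2*s)) (1-x) := by
        apply Real.contDiffAt_rpow_const_of_ne
        have h2 := hx.2
        have : (1:ℝ) - x > 0 := by
          simp only [Set.mem_Icc] at hx
          linarith [hx.2]
        exact this.ne'
      exact (h1.comp x ((contDiff_const.sub contDiff_id).contDiffAt)).contDiffWithinAt
  refine ⟨G, hGsmooth, ?_, ?_⟩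
  · intro n
    have hcont : ContinuousOn (iteratedDerivWithin n G (Set.Icc 0 (1/2))) (Set.Icc 0 (1/2)) :=
      hGsmooth.continuousOn_iteratedDerivWithin (by exact_mod_cast le_top)
        (uniqueDiffOn_Icc (by norm_num : (0:ℝ) < 1/2))
    obtain ⟨C, hC⟩ := isCompact_Icc.exists_bound_of_continuousOn hcont
    exact ⟨C, fun x hx => by simpa [Real.norm_eq_abs] using hC x hx⟩
  · intro x hx
    obtain ⟨hx0, hx2⟩ := hx
    have hkey := Stmt10Aux2.key hs0 hs1 hx0 hx2
    have hux : min |x| 1 = x := by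
      rw [abs_of_nonneg hx0]; exact min_eq_left (by linarith)
    have hfeq : (fun y : ℝ => (u x - u y) / |x - y| ^ (1 + 2 * s))
        = fun y : ℝ => (x - min |y| 1) / |x - y| ^ (1 + 2*s) := by
      funext y
      simp only [huv]
      rw [hux]
    refine ⟨?_, ?_⟩
    · intro ε hε
      rw [hfeq]
      exact hkey.1.integrableOn
    · have hset : ∀ ε : ℝ, {y : ℝ | ε < |y - x|} = (Metric.closedBall x ε)ᶜ := by
        intro ε
        ext y
        simp [Metric.mem_closedBall, Real.dist_eq, not_le]
      have htend0 : Tendsto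
          (fun ε : ℝ => ∫ y in Metric.closedBall x ε, (x - min |y| 1) / |x - y| ^ (1 + 2*s))
          (nhdsWithin 0 (Set.Ioi 0)) (nhds 0) := by
        apply hkey.1.tendsto_setIntegral_nhds_zero
        have h2 : Tendsto (fun ε : ℝ => ENNReal.ofReal (2*ε)) (nhdsWithin 0 (Set.Ioi 0))
            (nhds 0) := by
          have h3 : Tendsto (fun ε : ℝ => (2:ℝ)*ε) (nhdsWithin 0 (Set.Ioi 0)) (nhds 0) := by
            have h4 : Tendsto (fun ε : ℝ => (2:ℝ)*ε) (nhds 0) (nhds ((2:ℝ)*0)) :=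
              (continuous_const.mul continuous_id).tendsto 0
            rw [mul_zero] at h4
            exact h4.mono_left nhdsWithin_le_nhds
          have := (ENNReal.continuous_ofReal.tendsto (0:ℝ)).comp h3
          simpa [Function.comp_def, ENNReal.ofReal_mul] using this
        simpa [Function.comp_def, Real.volume_closedBall] using h2
      have h1 : Tendsto (fun ε : ℝ => fracLapCoef s *
            ((∫ y : ℝ, (x - min |y| 1) / |x - y| ^ (1 + 2*s)) -
              ∫ y in Metric.closedBall x ε, (x - min |y| 1) / |x - y| ^ (1 + 2*s)))
          (nhdsWithin 0 (Set.Ioi 0))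
          (nhds (fracLapCoef s * ((∫ y : ℝ, (x - min |y| 1) / |x - y| ^ (1 + 2*s)) - 0))) :=
        (tendsto_const_nhds.sub htend0).const_mul _
      rw [sub_zero] at h1
      have hval : fracLapCoef s * x ^ (1 - 2 * s) / (s * (1 - 2 * s)) + G x
          = fracLapCoef s * ∫ y : ℝ, (x - min |y| 1) / |x - y| ^ (1 + 2*s) := by
        rw [hkey.2, hGdef, hcdef]
        simp only
        field_simp
        ring
      rw [hval]
      apply h1.congr'
      filter_upwards [self_mem_nhdsWithin] with ε hε
      rw [hfeq, hset ε]
      congr 1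
      have hadd := MeasureTheory.integral_add_compl
        (measurableSet_closedBall (x := x) (ε := ε)) hkey.1
      rw [← hadd]
      ring
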